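/- arXiv:2601.20635 — 2 statements merged into one kernel-verified Lean document; each statement's English description precedes it below -/
import Mathlib

section
/- Let R be a commutative Noetherian ring, J an ideal of R, and R̂ the J-adic completion of R. For any finitely generated R-module π, Hom as R-modules from R̂ to the R̂-module π ⊗ R̂ coincides with Hom as R̂-modules: restriction of scalars gives a bijection Hom_{R̂}(R̂, M) ≅ Hom_R(R̂, M) for any finitely generated R̂-module M that is J-adically complete. -/
open AdicCompletion

/-!
Over a finitely generated ideal `J`, the kernel of `R̂ → R ⧸ Jⁿ` is `Jⁿ R̂`, so every element of
`R̂` is congruent modulo `Jⁿ R̂` to an element of `R`. An `R`-linear map `g : R̂ → M` sends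
`Jⁿ R̂` into `Jⁿ M`, hence `g x` is determined modulo every `Jⁿ M` by the restriction of `g` to
`R`, that is, by `g 1`. As `M` is `J`-adically Hausdorff, `g` is determined by `g 1`; in
particular it agrees with the `R̂`-linear map `x ↦ x • g 1`.
-/

namespace AdicCompletion

variable {R : Type*} [CommRing R] {J : Ideal R}

theorem exists_of_sub_mem_pow_smul_top (hJ : J.FG) (x : AdicCompletion J R) (n : ℕ) :
    ∃ r : R, x - of J R r ∈ (J ^ n • ⊤ : Submodule R (AdicCompletion J R)) := by
  obtain ⟨r, hr⟩ := Submodule.mkQ_surjective _ (eval J R n x)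
  refine ⟨r, ?_⟩
  rw [pow_smul_top_eq_ker_eval hJ, LinearMap.mem_ker, map_sub, eval_of, hr, sub_self]

theorem linearMap_ext_of_isHausdorff {M : Type*} [AddCommGroup M] [Module R M]
    [IsHausdorff J M] (hJ : J.FG) {f g : AdicCompletion J R →ₗ[R] M} (h : f 1 = g 1) :
    f = g := by
  refine LinearMap.ext fun x ↦ (IsHausdorff.eq_iff_smodEq (I := J)).mpr fun n ↦ ?_
  obtain ⟨r, hr⟩ := exists_of_sub_mem_pow_smul_top hJ x n
  have hof : (f - g) (of J R r) = 0 := by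
    rw [show of J R r = r • 1 from Algebra.algebraMap_eq_smul_one r, map_smul,
      LinearMap.sub_apply, h, sub_self, smul_zero]
  have hx : (f - g) x = (f - g) (x - of J R r) := by rw [map_sub, hof, sub_zero]
  rw [SModEq.sub_mem, ← LinearMap.sub_apply, hx]
  exact Submodule.smul_top_le_comap_smul_top _ (f - g) hr

end AdicCompletion

theorem restrictScalars_bijective_of_complete_general
    (R : Type*) [CommRing R] [IsNoetherianRing R] (J : Ideal R)
    (M : Type*) [AddCommGroup M]
    [Module (AdicCompletion J R) M] [Module R M]
    [IsScalarTower R (AdicCompletion J R) M]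
    [IsAdicComplete (J.map (algebraMap R (AdicCompletion J R))) M] :
    Function.Bijective
      (fun f : (AdicCompletion J R) →ₗ[AdicCompletion J R] M =>
        (f.restrictScalars R : AdicCompletion J R →ₗ[R] M)) := by
  refine ⟨LinearMap.restrictScalars_injective R, fun f ↦ ?_⟩
  have : IsHausdorff J M :=
    (IsHausdorff.map_algebraMap_iff (S := AdicCompletion J R)).mp inferInstance
  refine ⟨LinearMap.toSpanSingleton (AdicCompletion J R) M (f 1), ?_⟩
  exact linearMap_ext_of_isHausdorff (IsNoetherian.noetherian J) (one_smul _ _)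

/-- Let `R` be a commutative Noetherian ring, `J` an ideal, `R̂` the `J`-adic
completion of `R`.  For any finitely generated `R̂`-module `M` which is complete
with respect to the (extension of the) ideal `J`, restriction of scalars gives a
bijection `Hom_{R̂}(R̂, M) ≅ Hom_R(R̂, M)`: every `R`-linear map `R̂ → M` is
automatically `R̂`-linear. -/
theorem restrictScalars_bijective_of_complete
    (R : Type*) [CommRing R] [IsNoetherianRing R] (J : Ideal R)
    (M : Type*) [AddCommGroup M]
    [Module (AdicCompletion J R) M] [Module R M]
    [IsScalarTower R (AdicCompletion J R) M]
    [Module.Finite (AdicCompletion J R) M]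
    [IsAdicComplete (J.map (algebraMap R (AdicCompletion J R))) M] :
    Function.Bijective
      (fun f : (AdicCompletion J R) →ₗ[AdicCompletion J R] M =>
        (f.restrictScalars R : AdicCompletion J R →ₗ[R] M)) :=
  restrictScalars_bijective_of_complete_general R J M
end

section
/- The center of the affine Hecke algebra H(n, q), for q not a root of unity, contains the ring C[y₁^{±1},…,y_n^{±1}]^{S_n} of symmetric Laurent polynomials; in particular, every symmetric Laurent polynomial in y₁,…,y_n commutes with each generator T_i. -/
/-!
The quadratic and cross relations give the Bernstein relations
`Tᵢ yᵢ = yᵢ₊₁ Tᵢ - (q - 1) yᵢ₊₁` and `Tᵢ yᵢ₊₁ = yᵢ Tᵢ + (q - 1) yᵢ₊₁`, so `Tᵢ` commutes with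
`yᵢ + yᵢ₊₁` and `yᵢ yᵢ₊₁`. The centralizer of `Tᵢ` is a subalgebra, and by Newton's recursion
`p_{k+2} = (u + v) p_{k+1} - u v p_k` for power sums it contains every
`u^a v^b + u^b v^a` with `u = yᵢ`, `v = yᵢ₊₁`. Since `yᵢ, yᵢ₊₁` are adjacent in the product
defining a monomial, a monomial plus its image under `sᵢ` is such a symmetric expression sandwiched
between products of the other `yⱼ`, which commute with `Tᵢ`. Twice an `sᵢ`-invariant `p` is the sum
of these pairs.
-/

/-- Evaluation of a Laurent polynomial in `n` variables at a family of units
`y : Fin n → Aˣ` of an algebra `A`. -/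
noncomputable def laurentEval {n : ℕ} {A : Type*} [Ring A] [Algebra ℂ A]
    (y : Fin n → Aˣ) (p : AddMonoidAlgebra ℂ (Fin n →₀ ℤ)) : A :=
  Finsupp.sum (p.coeff : (Fin n →₀ ℤ) →₀ ℂ)
    (fun m c => c • (((List.finRange n).map fun j => ((y j ^ (m j) : Aˣ) : A)).prod))

section Bernstein

variable {K A : Type*} [CommSemiring K] [Ring A] [Algebra K A] {c : K} {t u v : A}

theorem commute_add_of_bernstein (hu : t * u = v * t - c • v) (hv : t * v = u * t + c • v) :
    Commute t (u + v) := by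
  rw [Commute, SemiconjBy, mul_add, hu, hv, add_mul]
  abel

theorem commute_mul_of_bernstein (huv : Commute u v) (hu : t * u = v * t - c • v)
    (hv : t * v = u * t + c • v) : Commute t (u * v) := by
  rw [Commute, SemiconjBy, ← mul_assoc, hu, sub_mul, mul_assoc, hv, mul_add, smul_mul_assoc,
    mul_smul_comm, ← mul_assoc, huv.eq]
  abel

end Bernstein

section HeckeQuadratic

variable {K A : Type*} [Field K] [Ring A] [Algebra K A] {q : K} {t u v : A}

theorem mul_self_eq_of_hecke_quadratic (quad : (t - algebraMap K A q) * (t + 1) = 0) :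
    t * t = (q - 1) • t + algebraMap K A q := by
  rw [sub_smul, one_smul, Algebra.smul_def, ← sub_eq_zero, ← quad]
  noncomm_ring

theorem mul_sub_smul_one_eq_of_hecke_quadratic (quad : (t - algebraMap K A q) * (t + 1) = 0) :
    t * (t - (q - 1) • 1) = algebraMap K A q := by
  rw [mul_sub, mul_smul_comm, mul_one, mul_self_eq_of_hecke_quadratic quad, add_sub_cancel_left]

theorem bernstein_left_of_hecke (hq : q ≠ 0) (quad : (t - algebraMap K A q) * (t + 1) = 0)
    (cross : t * u * t = algebraMap K A q * v) : t * u = v * t - (q - 1) • v := by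
  refine smul_right_injective A hq ?_
  calc q • (t * u) = t * u * (t * (t - (q - 1) • 1)) := by
        rw [mul_sub_smul_one_eq_of_hecke_quadratic quad, ← Algebra.commutes, Algebra.smul_def]
    _ = q • (v * t - (q - 1) • v) := by
        rw [← mul_assoc, cross, ← Algebra.smul_def, smul_mul_assoc, mul_sub, mul_smul_comm,
          mul_one]

theorem bernstein_right_of_hecke (hq : q ≠ 0) (quad : (t - algebraMap K A q) * (t + 1) = 0)
    (cross : t * u * t = algebraMap K A q * v) : t * v = u * t + (q - 1) • v := by
  refine smul_right_injective A hq ?_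
  calc q • (t * v) = t * t * (u * t) := by
        rw [← mul_smul_comm, Algebra.smul_def, ← cross]; noncomm_ring
    _ = q • (u * t + (q - 1) • v) := by
        rw [mul_self_eq_of_hecke_quadratic quad, add_mul, smul_mul_assoc, ← mul_assoc, cross,
          ← Algebra.smul_def, ← Algebra.smul_def, smul_add, smul_comm q]
        abel

end HeckeQuadratic

section SymmetricTwoVariables

variable {A S : Type*} [Ring A] [SetLike S A] [SubringClass S A] {s : S} {u v : Aˣ}

theorem Commute.units_pow_add_two_add_pow_add_two (huv : Commute u v) (k : ℕ) :
    ((u ^ (k + 2) : Aˣ) : A) + ((v ^ (k + 2) : Aˣ) : A) =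
      (u + v : A) * (((u ^ (k + 1) : Aˣ) : A) + ((v ^ (k + 1) : Aˣ) : A))
        - ((u * v : Aˣ) : A) * (((u ^ k : Aˣ) : A) + ((v ^ k : Aˣ) : A)) := by
  have hUV : Commute (u : A) (v : A) := huv.map (Units.coeHom A)
  simp only [Units.val_pow_eq_pow_val, Units.val_mul, mul_add, add_mul, pow_succ', mul_assoc]
  rw [← mul_assoc (v : A) (u : A), ← hUV.eq, mul_assoc]
  abel

theorem Commute.units_pow_add_pow_mem (huv : Commute u v) (hsum : (u + v : A) ∈ s)
    (hprod : ((u * v : Aˣ) : A) ∈ s) (k : ℕ) :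
    ((u ^ k : Aˣ) : A) + ((v ^ k : Aˣ) : A) ∈ s := by
  suffices ((u ^ k : Aˣ) : A) + ((v ^ k : Aˣ) : A) ∈ s ∧
      ((u ^ (k + 1) : Aˣ) : A) + ((v ^ (k + 1) : Aˣ) : A) ∈ s from this.1
  induction k with
  | zero => simpa using ⟨add_mem (one_mem s) (one_mem s), hsum⟩
  | succ k ih =>
    refine ⟨ih.2, ?_⟩
    rw [huv.units_pow_add_two_add_pow_add_two]
    exact sub_mem (mul_mem hsum ih.2) (mul_mem hprod ih.1)

theorem Commute.units_zpow_add_zpow_mem (huv : Commute u v) (hsum : (u + v : A) ∈ s)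
    (hprod : ((u * v : Aˣ) : A) ∈ s) (hprod_inv : (((u * v)⁻¹ : Aˣ) : A) ∈ s) (k : ℤ) :
    ((u ^ k : Aˣ) : A) + ((v ^ k : Aˣ) : A) ∈ s := by
  obtain ⟨k, rfl | rfl⟩ := k.eq_nat_or_neg
  · simpa using huv.units_pow_add_pow_mem hsum hprod k
  · have hsum_inv : ((u⁻¹ : Aˣ) : A) + ((v⁻¹ : Aˣ) : A) = (((u * v)⁻¹ : Aˣ) : A) * (v + u) := by
      calc ((u⁻¹ : Aˣ) : A) + ((v⁻¹ : Aˣ) : A)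
          = ((u⁻¹ * v⁻¹ * v : Aˣ) : A) + ((v⁻¹ * u⁻¹ * u : Aˣ) : A) := by
            simp only [inv_mul_cancel_right]
        _ = (((u * v)⁻¹ : Aˣ) : A) * (v + u) := by
            rw [← mul_inv_rev, ← mul_inv_rev, ← huv.eq, mul_add, Units.val_mul, Units.val_mul]
    have hprod_inv' : ((u⁻¹ * v⁻¹ : Aˣ) : A) ∈ s := by
      rwa [← mul_inv_rev, ← huv.eq]
    simpa using huv.inv_inv.units_pow_add_pow_mem
      (hsum_inv ▸ mul_mem hprod_inv (add_comm (u : A) v ▸ hsum)) hprod_inv' k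

theorem Commute.units_zpow_mul_zpow_add_zpow_mul_zpow_mem (huv : Commute u v) (hsum : (u + v : A) ∈ s)
    (hprod : ((u * v : Aˣ) : A) ∈ s) (hprod_inv : (((u * v)⁻¹ : Aˣ) : A) ∈ s) (a b : ℤ) :
    ((u ^ a : Aˣ) : A) * ((v ^ b : Aˣ) : A) + ((u ^ b : Aˣ) : A) * ((v ^ a : Aˣ) : A) ∈ s := by
  have hfactor : ((u ^ a : Aˣ) : A) * ((v ^ b : Aˣ) : A) + ((u ^ b : Aˣ) : A) * ((v ^ a : Aˣ) : A)
      = (((u * v) ^ b : Aˣ) : A) * (((u ^ (a - b) : Aˣ) : A) + ((v ^ (a - b) : Aˣ) : A)) := by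
    rw [mul_add, ← Units.val_mul, ← Units.val_mul, ← Units.val_mul, ← Units.val_mul,
      huv.mul_zpow, mul_assoc, (huv.symm.zpow_zpow _ _).eq, ← mul_assoc, ← zpow_add,
      mul_assoc, ← zpow_add, add_sub_cancel]
  rw [hfactor]
  refine mul_mem ?_ (huv.units_zpow_add_zpow_mem hsum hprod hprod_inv (a - b))
  obtain ⟨b, rfl | rfl⟩ := b.eq_nat_or_neg
  · simpa using pow_mem hprod b
  · simpa using pow_mem hprod_inv b

end SymmetricTwoVariables

theorem List.eq_take_append_getElem_cons_getElem_cons_drop {α : Type*} (l : List α) {i : ℕ}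
    (h : i + 1 < l.length) : l = l.take i ++ l[i] :: l[i + 1] :: l.drop (i + 2) := by
  rw [← List.drop_eq_getElem_cons, ← List.drop_eq_getElem_cons, List.take_append_drop]

theorem List.finRange_eq_take_append_cons_cons_drop {n : ℕ} {a b : Fin n}
    (hab : (b : ℕ) = a + 1) :
    List.finRange n = (List.finRange n).take a ++ a :: b :: (List.finRange n).drop (a + 2) := by
  convert (List.finRange n).eq_take_append_getElem_cons_getElem_cons_drop (i := a)
    (by simp [← hab]) <;> simp [Fin.ext_iff, hab]

def laurentMonomial {n : ℕ} {M : Type*} [Monoid M] (y : Fin n → Mˣ) (m : Fin n →₀ ℤ) : M :=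
  ((List.finRange n).map fun j => ((y j ^ m j : Mˣ) : M)).prod

theorem laurentEval_eq_sum_laurentMonomial {n : ℕ} {A : Type*} [Ring A] [Algebra ℂ A]
    (y : Fin n → Aˣ) (p : AddMonoidAlgebra ℂ (Fin n →₀ ℤ)) :
    laurentEval y p = p.coeff.sum fun m c => c • laurentMonomial y m :=
  rfl

section Monomials

variable {A S : Type*} [Ring A] [SetLike S A] [SubringClass S A] {s : S}

theorem List.prod_map_add_prod_map_mem {ι : Type*} (l₁ l₂ : List ι) (a b : ι) {f g : ι → A}
    (hfg : ∀ j ∈ l₁ ++ l₂, f j = g j) (hf : ∀ j ∈ l₁ ++ l₂, f j ∈ s)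
    (hab : f a * f b + g a * g b ∈ s) :
    ((l₁ ++ a :: b :: l₂).map f).prod + ((l₁ ++ a :: b :: l₂).map g).prod ∈ s := by
  have hg₁ : l₁.map g = l₁.map f :=
    List.map_congr_left fun j hj => (hfg j (List.mem_append_left _ hj)).symm
  have hg₂ : l₂.map g = l₂.map f :=
    List.map_congr_left fun j hj => (hfg j (List.mem_append_right _ hj)).symm
  have h₁ : (l₁.map f).prod ∈ s :=
    list_prod_mem <| List.forall_mem_map.mpr fun j hj => hf j (List.mem_append_left _ hj)
  have h₂ : (l₂.map f).prod ∈ s :=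
    list_prod_mem <| List.forall_mem_map.mpr fun j hj => hf j (List.mem_append_right _ hj)
  simp only [List.map_append, List.map_cons, List.prod_append, List.prod_cons, hg₁, hg₂]
  have : (l₁.map f).prod * (f a * (f b * (l₂.map f).prod)) +
      (l₁.map f).prod * (g a * (g b * (l₂.map f).prod)) =
      (l₁.map f).prod * (f a * f b + g a * g b) * (l₂.map f).prod := by noncomm_ring
  rw [this]
  exact mul_mem (mul_mem h₁ hab) h₂

theorem laurentMonomial_add_laurentMonomial_swap_mem {n : ℕ} {a b : Fin n}
    (hab : (b : ℕ) = a + 1) (y : Fin n → Aˣ)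
    (hy : ∀ j, j ≠ a → j ≠ b → ∀ k : ℤ, ((y j ^ k : Aˣ) : A) ∈ s)
    (hpair : ∀ k l : ℤ, ((y a ^ k : Aˣ) : A) * ((y b ^ l : Aˣ) : A) +
      ((y a ^ l : Aˣ) : A) * ((y b ^ k : Aˣ) : A) ∈ s)
    (m : Fin n →₀ ℤ) :
    laurentMonomial y m + laurentMonomial y (m.equivMapDomain (Equiv.swap a b)) ∈ s := by
  have hsplit := List.finRange_eq_take_append_cons_cons_drop hab
  set l₁ := (List.finRange n).take a
  set l₂ := (List.finRange n).drop (a + 2)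
  have houtside : ∀ j ∈ l₁ ++ l₂, j ≠ a ∧ j ≠ b := by
    have hnodup := List.nodup_finRange n
    rw [hsplit] at hnodup
    simp only [List.nodup_append, List.nodup_cons, List.mem_cons] at hnodup
    intro j hj
    rcases List.mem_append.mp hj with hj | hj
    · exact ⟨hnodup.2.2 j hj a (Or.inl rfl), hnodup.2.2 j hj b (Or.inr (Or.inl rfl))⟩
    · exact ⟨fun e => hnodup.2.1.1 (Or.inr (e ▸ hj)), fun e => hnodup.2.1.2.1 (e ▸ hj)⟩
  unfold laurentMonomial
  rw [hsplit]
  refine List.prod_map_add_prod_map_mem l₁ l₂ _ _ (fun j hj => ?_) (fun j hj => ?_) ?_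
  · rw [Finsupp.equivMapDomain_apply, Equiv.symm_swap, Equiv.swap_apply_of_ne_of_ne]
    exacts [(houtside j hj).1, (houtside j hj).2]
  · exact hy j (houtside j hj).1 (houtside j hj).2 _
  · simpa [Finsupp.equivMapDomain_apply] using hpair (m a) (m b)

end Monomials

theorem Finsupp.sum_smul_mem_of_add_comp_mem {α K M S : Type*} [DivisionRing K] [NeZero (2 : K)]
    [AddCommMonoid M] [Module K M] [SetLike S M] [AddSubmonoidClass S M] [SMulMemClass S K M]
    {s : S} (c : α →₀ K) (σ : α ≃ α) (hc : ∀ a, c (σ a) = c a) {g : α → M}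
    (hg : ∀ a, g a + g (σ a) ∈ s) : (c.sum fun a r => r • g a) ∈ s := by
  have hσ : c.equivMapDomain σ = c := by
    ext a
    rw [Finsupp.equivMapDomain_apply, ← hc, Equiv.apply_symm_apply]
  have hshift : (c.sum fun a r => r • g (σ a)) = c.sum fun a r => r • g a := by
    conv_rhs => rw [← hσ, Finsupp.sum_equivMapDomain]
  have htwo : (2 : K) • (c.sum fun a r => r • g a) = c.sum fun a r => r • (g a + g (σ a)) := by
    simp only [smul_add, Finsupp.sum_add, hshift, two_smul]
  rw [← inv_smul_smul₀ (two_ne_zero (α := K)) (c.sum fun a r => r • g a), htwo]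
  exact SMulMemClass.smul_mem _ (sum_mem fun a _ => SMulMemClass.smul_mem _ (hg a))

theorem symmetric_laurent_commutes_with_hecke_generators
    (n : ℕ) (A : Type*) [Ring A] [Algebra ℂ A]
    (q : ℂ) (hq0 : q ≠ 0)
    (y : Fin n → Aˣ) (T : ℕ → A)
    (hyy : ∀ i j : Fin n, (y i : A) * (y j : A) = (y j : A) * (y i : A))
    (quad : ∀ i : ℕ, i + 1 < n → (T i - algebraMap ℂ A q) * (T i + 1) = 0)
    (hTy : ∀ (i : ℕ) (h : i + 1 < n),
      T i * (y ⟨i, by omega⟩ : A) * T i = algebraMap ℂ A q * (y ⟨i + 1, h⟩ : A))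
    (hTy' : ∀ (i : ℕ), i + 1 < n → ∀ j : Fin n, (j : ℕ) ≠ i → (j : ℕ) ≠ i + 1 →
      T i * (y j : A) = (y j : A) * T i)
    (p : AddMonoidAlgebra ℂ (Fin n →₀ ℤ))
    (hp : ∀ σ : Equiv.Perm (Fin n), ∀ m : Fin n →₀ ℤ,
      (p.coeff : (Fin n →₀ ℤ) →₀ ℂ) (Finsupp.equivMapDomain σ m) = (p.coeff : (Fin n →₀ ℤ) →₀ ℂ) m) :
    ∀ i : ℕ, i + 1 < n → laurentEval y p * T i = T i * laurentEval y p := by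
  intro i h
  have mem_centralizer {x : A} (hx : Commute (T i) x) : x ∈ Subalgebra.centralizer ℂ {T i} :=
    (Subalgebra.mem_centralizer_iff ℂ).mpr fun _ hg => (Set.mem_singleton_iff.mp hg) ▸ hx.eq
  have hleft := bernstein_left_of_hecke hq0 (quad i h) (hTy i h)
  have hright := bernstein_right_of_hecke hq0 (quad i h) (hTy i h)
  have hprod : Commute (T i) ((y ⟨i, by omega⟩ * y ⟨i + 1, h⟩ : Aˣ) : A) :=
    commute_mul_of_bernstein (hyy _ _) hleft hright
  have hunits : Commute (y ⟨i, by omega⟩) (y ⟨i + 1, h⟩) := Units.ext (hyy _ _)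
  have hpair := hunits.units_zpow_mul_zpow_add_zpow_mul_zpow_mem
    (mem_centralizer (commute_add_of_bernstein hleft hright)) (mem_centralizer hprod)
    (mem_centralizer hprod.units_inv_right)
  have hmonomial := laurentMonomial_add_laurentMonomial_swap_mem (rfl : i + 1 = i + 1) y
    (fun j hj hj' k => mem_centralizer <| Commute.units_zpow_right
      (hTy' i h j (fun e => hj (Fin.ext e)) (fun e => hj' (Fin.ext e))) k) hpair
  have hmem : laurentEval y p ∈ Subalgebra.centralizer ℂ {T i} := by
    rw [laurentEval_eq_sum_laurentMonomial]
    exact Finsupp.sum_smul_mem_of_add_comp_mem p.coeff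
      (Finsupp.equivCongrLeft (Equiv.swap ⟨i, by omega⟩ ⟨i + 1, h⟩)) (hp _) hmonomial
  exact ((Subalgebra.mem_centralizer_iff ℂ).mp hmem (T i) rfl).symm
end
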